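/- arXiv:1903.05005 — 9 statements merged into one kernel-verified Lean document; each statement's English description precedes it below -/
import Mathlib

section
/- No regular graph of odd degree admits a distance magic labeling. -/
/-!
Summing the magic condition over all vertices counts every label `r` times, so an `r`-regular
distance magic graph of order `n` has magic constant `k` with `2k = r(n + 1)`. By the handshake
lemma an `r`-regular graph with `r` odd has even order, which makes `r(n + 1)` odd.
-/

open Finset

namespace SimpleGraph

variable {V : Type*} [Fintype V]

def IsDistanceMagic (G : SimpleGraph V) [DecidableRel G.Adj] (f : V ≃ Fin (Fintype.card V))
    (k : ℕ) : Prop :=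
  ∀ x : V, ∑ y ∈ G.neighborFinset x, ((f y : ℕ) + 1) = k

variable {G : SimpleGraph V} [DecidableRel G.Adj]

theorem IsRegularOfDegree.sum_sum_neighborFinset {M : Type*} [AddCommMonoid M] {r : ℕ}
    (h : G.IsRegularOfDegree r) (g : V → M) :
    ∑ x, ∑ y ∈ G.neighborFinset x, g y = r • ∑ y, g y := by
  calc ∑ x, ∑ y ∈ G.neighborFinset x, g y
      = ∑ y, ∑ _x ∈ G.neighborFinset y, g y :=
        sum_comm' fun x y => by simp [mem_neighborFinset, G.adj_comm]
    _ = ∑ y, r • g y := by simp only [sum_const, card_neighborFinset_eq_degree, h.degree_eq]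
    _ = r • ∑ y, g y := (smul_sum ..).symm

theorem IsRegularOfDegree.even_card_of_odd {r : ℕ} (h : G.IsRegularOfDegree r) (hr : Odd r) :
    Even (Fintype.card V) := by
  simpa [h.degree_eq, hr] using G.even_card_odd_degree_vertices

theorem two_mul_sum_equiv_fin_succ (f : V ≃ Fin (Fintype.card V)) :
    2 * ∑ y, ((f y : ℕ) + 1) = Fintype.card V * (Fintype.card V + 1) := by
  have hshift : ∑ y, ((f y : ℕ) + 1) = ∑ i ∈ range (Fintype.card V + 1), i := by
    rw [Equiv.sum_comp f (fun i : Fin (Fintype.card V) => (i : ℕ) + 1), Fin.sum_univ_eq_sum_range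
      (fun i => i + 1), sum_range_succ' (fun i => i)]
    rfl
  rw [hshift, mul_comm, sum_range_id_mul_two, Nat.add_sub_cancel, mul_comm]

theorem IsDistanceMagic.two_mul_eq [Nonempty V] {f : V ≃ Fin (Fintype.card V)} {k r : ℕ}
    (hf : G.IsDistanceMagic f k) (h : G.IsRegularOfDegree r) :
    2 * k = r * (Fintype.card V + 1) := by
  have htotal : Fintype.card V * k = r * ∑ y, ((f y : ℕ) + 1) := by
    simpa [hf _] using h.sum_sum_neighborFinset fun y => (f y : ℕ) + 1
  refine Nat.eq_of_mul_eq_mul_left (Fintype.card_pos (α := V)) ?_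
  calc Fintype.card V * (2 * k) = r * (2 * ∑ y, ((f y : ℕ) + 1)) := by rw [mul_left_comm r, ← htotal]; ring
    _ = Fintype.card V * (r * (Fintype.card V + 1)) := by
      rw [two_mul_sum_equiv_fin_succ]; ring

end SimpleGraph

theorem stmt_1_general {V : Type*} [Fintype V] [Nonempty V]
    (G : SimpleGraph V) [DecidableRel G.Adj] (r : ℕ)
    (hr : Odd r) (hreg : G.IsRegularOfDegree r) :
    ¬ ∃ (f : V ≃ Fin (Fintype.card V)) (k : ℕ),
        ∀ x : V, ∑ y ∈ G.neighborFinset x, ((f y : ℕ) + 1) = k := by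
  rintro ⟨f, k, hf⟩
  have hconst : 2 * k = r * (Fintype.card V + 1) := SimpleGraph.IsDistanceMagic.two_mul_eq hf hreg
  have hodd : Odd (r * (Fintype.card V + 1)) := hr.mul (hreg.even_card_of_odd hr).add_one
  rw [← hconst] at hodd
  exact Nat.not_even_iff_odd.mpr hodd (even_two_mul k)

/-- No regular graph of odd degree admits a distance magic labeling. -/
theorem stmt_1 {V : Type*} [Fintype V] [DecidableEq V] [Nonempty V]
    (G : SimpleGraph V) [DecidableRel G.Adj] (r : ℕ)
    (hr : Odd r) (hreg : G.IsRegularOfDegree r) :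
    ¬ ∃ (f : V ≃ Fin (Fintype.card V)) (k : ℕ),
        ∀ x : V, ∑ y ∈ G.neighborFinset x, ((f y : ℕ) + 1) = k :=
  stmt_1_general G r hr hreg
end

section
/- Let D ⊆ {0,1,...,n} and let f: 𝔽₂ⁿ → 𝔽₂ⁿ be a bijection such that f(N_D(u)) is a balanced subset of 𝔽₂ⁿ for every u ∈ 𝔽₂ⁿ, where N_D(u) = {v : the Hamming distance d(u,v) ∈ D}. Then the labeling ζ ∘ f gives each vertex u weight ∑_{v ∈ N_D(u)} ζ(f(v)) = (|N_D(u)|/2)(2ⁿ − 1), which is a constant independent of u; hence ζ ∘ f induces a D-magic labeling of the hypercube Qₙ. -/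
/-! Translation by a fixed vector is a Hamming isometry of `𝔽₂ⁿ`, so `|N_D(u)|` does not depend
on `u`. If `A` is balanced, every bit position `i` is set in exactly `|A|/2` elements of `A`, so
summing `ζ` over `A` bit by bit gives `(|A|/2) ∑ᵢ 2ⁱ = (|A|/2)(2ⁿ − 1)`; apply this to
`A = f(N_D(u))`, which has `|N_D(u)|` elements because `f` is injective. -/

open Finset

section Hamming

variable {ι : Type*} [Fintype ι] {β : ι → Type*} [∀ i, AddGroup (β i)] [∀ i, DecidableEq (β i)]

lemma hammingDist_add_add_left (c x y : ∀ i, β i) : hammingDist (c + x) (c + y) = hammingDist x y :=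
  hammingDist_comp (fun i => (c i + ·)) fun i => add_right_injective (c i)

lemma card_filter_hammingDist_mem_eq [DecidableEq ι] [∀ i, Fintype (β i)] (D : Finset ℕ)
    (u w : ∀ i, β i) :
    #{v | hammingDist u v ∈ D} = #{v | hammingDist w v ∈ D} :=
  card_equiv (Equiv.addLeft (w - u)) fun v => by
    simp [← hammingDist_add_add_left (w - u) u v]

end Hamming

lemma ZMod.sum_val_two_eq_card_filter_eq_one {α : Type*} (s : Finset α) (g : α → ZMod 2) :
    ∑ a ∈ s, (g a).val = #{a ∈ s | g a = 1} := by
  rw [card_filter]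
  refine sum_congr rfl fun a _ => ?_
  generalize g a = x
  fin_cases x <;> rfl

lemma Nat.sum_fin_two_pow (n : ℕ) : ∑ i : Fin n, 2 ^ (i : ℕ) = 2 ^ n - 1 := by
  rw [Fin.sum_univ_eq_sum_range (2 ^ ·), Nat.geomSum_eq le_rfl, Nat.div_one]

section Balanced

variable {ι : Type*} [Fintype ι]

def IsBalanced (A : Finset (ι → ZMod 2)) : Prop :=
  ∀ i, 2 * #{a ∈ A | a i = 1} = #A

lemma IsBalanced.two_mul_sum_weighted {A : Finset (ι → ZMod 2)} (hA : IsBalanced A)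
    (w : ι → ℕ) : 2 * ∑ a ∈ A, ∑ i, (a i).val * w i = #A * ∑ i, w i := by
  rw [sum_comm, mul_sum, mul_sum]
  refine sum_congr rfl fun i _ => ?_
  rw [← sum_mul, ← mul_assoc, ZMod.sum_val_two_eq_card_filter_eq_one, hA i]

lemma IsBalanced.two_mul_sum_binary {n : ℕ} {A : Finset (Fin n → ZMod 2)} (hA : IsBalanced A) :
    2 * ∑ a ∈ A, ∑ i : Fin n, (a i).val * 2 ^ (i : ℕ) = #A * (2 ^ n - 1) := by
  rw [hA.two_mul_sum_weighted, Nat.sum_fin_two_pow]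

end Balanced

/-- If `f : 𝔽₂ⁿ → 𝔽₂ⁿ` is a bijection such that `f(N_D(u))` is balanced for every `u`,
then every vertex `u` has weight `∑_{v ∈ N_D(u)} ζ(f v) = (|N_D(u)|/2)(2ⁿ−1)` (stated
multiplied by 2), which is constant; hence `ζ ∘ f` induces a `D`-magic labeling of `Qₙ`. -/
theorem stmt_4 (n : ℕ) (D : Finset ℕ) (f : (Fin n → ZMod 2) ≃ (Fin n → ZMod 2))
    (hbal : ∀ u : Fin n → ZMod 2, ∀ i : Fin n,
      2 * (((Finset.univ.filter (fun v => hammingDist u v ∈ D)).image f).filter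
            (fun a => a i = 1)).card
        = ((Finset.univ.filter (fun v => hammingDist u v ∈ D)).image f).card) :
    (∀ u : Fin n → ZMod 2,
      2 * ∑ v ∈ Finset.univ.filter (fun v => hammingDist u v ∈ D),
            (∑ i : Fin n, (f v i).val * 2 ^ (i : ℕ))
        = (Finset.univ.filter (fun v => hammingDist u v ∈ D)).card * (2 ^ n - 1)) ∧
    ∃ k : ℕ, ∀ u : Fin n → ZMod 2,
      ∑ v ∈ Finset.univ.filter (fun v => hammingDist u v ∈ D),
          (∑ i : Fin n, (f v i).val * 2 ^ (i : ℕ)) = k := by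
  have hweight : ∀ u : Fin n → ZMod 2,
      2 * ∑ v ∈ univ.filter (fun v => hammingDist u v ∈ D), ∑ i : Fin n, (f v i).val * 2 ^ (i : ℕ)
        = #(univ.filter (fun v => hammingDist u v ∈ D)) * (2 ^ n - 1) := fun u => by
    rw [← sum_image (f := fun a : Fin n → ZMod 2 => ∑ i : Fin n, (a i).val * 2 ^ (i : ℕ))
        f.injective.injOn, ← card_image_of_injective _ f.injective]
    exact IsBalanced.two_mul_sum_binary (hbal u)
  refine ⟨hweight, ∑ v ∈ univ.filter (fun v => hammingDist 0 v ∈ D),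
    ∑ i : Fin n, (f v i).val * 2 ^ (i : ℕ), fun u => Nat.eq_of_mul_eq_mul_left two_pos ?_⟩
  rw [hweight u, hweight 0, card_filter_hammingDist_mem_eq D u 0]
end

section
/- Let f: 𝔽₂ⁿ → 𝔽₂ⁿ be a nonsingular linear transformation with matrix M (over 𝔽₂) with respect to the standard basis, and suppose n is odd. Then f is closed neighbor-balanced (i.e., f(N[u]) is balanced for every u, where N[u] = {u} ∪ {u + eⱼ : 1 ≤ j ≤ n}) if and only if every row of M has exactly (n+1)/2 entries equal to 1. -/
/-!
Since `M` is injective, `f(N[u])` has `n + 1` elements. The `i`-th coordinate of `M (u + eⱼ)` is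
`(Mu)ᵢ + Mᵢⱼ`, so if row `i` of `M` has weight `w`, the number of elements of `f(N[u])` with
`i`-th coordinate `1` is `w` when `(Mu)ᵢ = 0` and `1 + (n - w)` when `(Mu)ᵢ = 1`.
Taking `u = 0` forces `2w = n + 1`; conversely, for odd `n` and `w = (n + 1) / 2` both counts
equal `(n + 1) / 2`.
-/

open Finset Matrix

theorem pi_single_left_injective {ι R : Type*} [DecidableEq ι] [Zero R] {a : R} (ha : a ≠ 0) :
    Function.Injective fun i : ι => Pi.single i a := by
  intro i j hij
  by_contra hne
  exact ha (by simpa [Pi.single_eq_of_ne' hne] using (congrFun hij j).symm)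

theorem ZMod.add_eq_one_iff_eq_add_one {c x : ZMod 2} : c + x = 1 ↔ x = c + 1 := by
  decide +revert

theorem ZMod.ne_one_iff_eq_zero {x : ZMod 2} : x ≠ 1 ↔ x = 0 := by
  decide +revert

theorem card_filter_eq_one_add_card_filter_eq_zero {ι : Type*} [Fintype ι] (x : ι → ZMod 2) :
    #{j | x j = 1} + #{j | x j = 0} = Fintype.card ι := by
  simpa only [← ne_eq, ZMod.ne_one_iff_eq_zero, card_univ]
    using card_filter_add_card_filter_not (s := univ) (x · = 1)

section ClosedNbhd

variable {ι : Type*} [Fintype ι] [DecidableEq ι]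

def closedNbhd (u : ι → ZMod 2) : Finset (ι → ZMod 2) :=
  insert u (univ.image fun j => u + Pi.single j 1)

omit [Fintype ι] in
theorem add_single_one_injective (u : ι → ZMod 2) :
    Function.Injective fun j : ι => u + Pi.single j (1 : ZMod 2) :=
  (add_right_injective u).comp (pi_single_left_injective one_ne_zero)

theorem notMem_image_add_single_one (u : ι → ZMod 2) :
    u ∉ univ.image fun j => u + Pi.single j (1 : ZMod 2) := by
  simp only [mem_image, mem_univ, true_and, not_exists]
  intro j h
  simpa using congrFun h j

theorem card_closedNbhd (u : ι → ZMod 2) : #(closedNbhd u) = Fintype.card ι + 1 := by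
  rw [closedNbhd, card_insert_of_notMem (notMem_image_add_single_one u),
    card_image_of_injective _ (add_single_one_injective u), card_univ]

theorem mulVec_add_single_one_apply {m R : Type*} [NonAssocSemiring R] (M : Matrix m ι R)
    (u : ι → R) (i : m) (j : ι) : (M *ᵥ (u + Pi.single j 1)) i = (M *ᵥ u) i + M i j := by
  rw [mulVec_add, mulVec_single_one]
  rfl

theorem card_filter_image_closedNbhd {m : Type*} [Fintype m] [DecidableEq m]
    {M : Matrix m ι (ZMod 2)} (hM : Function.Injective M.mulVec) (u : ι → ZMod 2) (i : m) :
    #{a ∈ (closedNbhd u).image M.mulVec | a i = 1}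
      = (if (M *ᵥ u) i = 1 then 1 else 0) + #{j | M i j = (M *ᵥ u) i + 1} := by
  rw [card_filter, sum_image hM.injOn, closedNbhd, sum_insert (notMem_image_add_single_one u),
    sum_image (add_single_one_injective u).injOn, card_filter]
  simp only [mulVec_add_single_one_apply, ZMod.add_eq_one_iff_eq_add_one]

end ClosedNbhd

/-- For `n` odd and `M` an invertible `n×n` matrix over `𝔽₂` with `f(u) = Mu`,
`f` is closed neighbor-balanced iff every row of `M` has exactly `(n+1)/2` ones.
(Balancedness stated multiplied by 2.) -/
theorem stmt_5 (n : ℕ) (hn : Odd n) (M : Matrix (Fin n) (Fin n) (ZMod 2))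
    (hM : IsUnit M) :
    (∀ u : Fin n → ZMod 2, ∀ i : Fin n,
      2 * (((insert u (Finset.univ.image (fun j => u + Pi.single j 1))).image
              (fun v => M.mulVec v)).filter (fun a => a i = 1)).card
        = ((insert u (Finset.univ.image (fun j => u + Pi.single j 1))).image
              (fun v => M.mulVec v)).card)
      ↔ (∀ i : Fin n, (Finset.univ.filter (fun j => M i j = 1)).card = (n + 1) / 2) := by
  have hinj : Function.Injective M.mulVec := mulVec_injective_iff_isUnit.2 hM
  have hcard (u : Fin n → ZMod 2) : #((closedNbhd u).image M.mulVec) = n + 1 := by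
    rw [card_image_of_injective _ hinj, card_closedNbhd, Fintype.card_fin]
  change (∀ u i, 2 * #{a ∈ (closedNbhd u).image M.mulVec | a i = 1}
    = #((closedNbhd u).image M.mulVec)) ↔ _
  simp only [card_filter_image_closedNbhd hinj, hcard]
  constructor
  · intro h i
    have h0 := h 0 i
    simp only [mulVec_zero, Pi.zero_apply, zero_ne_one, if_false, zero_add] at h0
    omega
  · intro h u i
    obtain ⟨k, rfl⟩ := hn
    have hw := h i
    have hz := card_filter_eq_one_add_card_filter_eq_zero (M i)
    rw [Fintype.card_fin] at hz
    by_cases hc : (M *ᵥ u) i = 1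
    · simp only [hc, if_true, show (1 : ZMod 2) + 1 = 0 from rfl]
      omega
    · simp only [ZMod.ne_one_iff_eq_zero.mp hc, zero_ne_one, if_false, zero_add]
      omega
end

section
/- If n ≡ 1 (mod 4), then the hypercube Qₙ admits a closed distance magic labeling, i.e., a bijection f: V(Qₙ) → {1,...,2ⁿ} such that ∑_{y ∈ N[x]} f(y) is constant over all vertices x. -/
/-!
Label a vertex `y` by one plus the binary number whose digits are the coordinates of `A y`,
for a suitable invertible `𝔽₂`-matrix `A`. Flipping coordinate `j` of `x` flips bit `i` of `A x`
exactly when `A i j = 1`; so if row `i` of `A` has `c` ones and `n = 2c - 1`, bit `i` of `A y` is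
set for exactly `c` of the `n + 1` vertices `y ∈ N[x]`, whatever `x` is. Every bit, hence every
label sum, is then independent of `x`.

For `n = 2k - 1` with `k` odd we take the circulant matrix whose rows are cyclic windows of
length `k`: in its kernel, consecutive window sums show that a vector is `k`-periodic, hence
(as `2k ≡ 1 mod n`) constant, hence zero because `k` is odd.
-/

open Finset Matrix

section Hypercube

variable {ι : Type*} [Fintype ι] [DecidableEq ι]

lemma hammingNorm_le_one_iff {v : ι → ZMod 2} :
    hammingNorm v ≤ 1 ↔ v = 0 ∨ ∃ j, v = Pi.single j 1 := by
  constructor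
  · intro h
    rcases Nat.le_one_iff_eq_zero_or_eq_one.mp h with h0 | h1
    · exact .inl (hammingNorm_eq_zero.mp h0)
    · obtain ⟨j, hj⟩ := card_eq_one.mp h1
      refine .inr ⟨j, funext fun i => ?_⟩
      have hi : v i ≠ 0 ↔ i = j := by simpa using Finset.ext_iff.mp hj i
      rcases eq_or_ne i j with rfl | hij
      · simpa using (by decide : ∀ a : ZMod 2, a ≠ 0 → a = 1) _ (hi.mpr rfl)
      · simpa [hij] using mt hi.mp hij
  · rintro (rfl | ⟨j, rfl⟩)
    · simp
    · refine card_le_one.mpr fun a ha b hb => ?_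
      have hsupp : ∀ i, (Pi.single j 1 : ι → ZMod 2) i ≠ 0 → i = j := fun i hi =>
        by_contra fun hij => hi (Pi.single_eq_of_ne hij 1)
      simp only [mem_filter, mem_univ, true_and] at ha hb
      rw [hsupp a ha, hsupp b hb]

lemma filter_hammingDist_le_one (x : ι → ZMod 2) :
    univ.filter (fun y => hammingDist x y ≤ 1) =
      insert x (univ.image fun j => x + Pi.single j 1) := by
  ext y
  obtain ⟨v, rfl⟩ : ∃ v, y = x + v := ⟨y - x, by abel⟩
  rw [mem_filter, hammingDist_eq_hammingNorm, neg_add_cancel_left]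
  simp [hammingNorm_le_one_iff, eq_comm]

lemma sum_filter_hammingDist_le_one {M : Type*} [AddCommMonoid M] (x : ι → ZMod 2)
    (g : (ι → ZMod 2) → M) :
    ∑ y ∈ univ.filter (fun y => hammingDist x y ≤ 1), g y =
      g x + ∑ j, g (x + Pi.single j 1) := by
  rw [filter_hammingDist_le_one, sum_insert, sum_image]
  · intro a _ b _ h
    by_contra hab
    simpa [hab] using congrFun (add_left_cancel h) a
  · simp [funext_iff, Pi.single_apply]

lemma card_filter_hammingDist_le_one (x : ι → ZMod 2) :
    #(univ.filter fun y => hammingDist x y ≤ 1) = Fintype.card ι + 1 := by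
  rw [card_eq_sum_ones, sum_filter_hammingDist_le_one, sum_const, card_univ, smul_eq_mul,
    mul_one, add_comm]

lemma sum_filter_hammingDist_le_one_val_mulVec {κ : Type*} (A : Matrix κ ι (ZMod 2))
    (i : κ) (hA : 2 * ∑ j, (A i j).val = Fintype.card ι + 1) (x : ι → ZMod 2) :
    ∑ y ∈ univ.filter (fun y => hammingDist x y ≤ 1), ((A *ᵥ y) i).val =
      ∑ j, (A i j).val := by
  rw [sum_filter_hammingDist_le_one]
  simp only [mulVec_add, mulVec_single_one, Pi.add_apply, col_apply]
  rcases (by decide : ∀ a : ZMod 2, a = 0 ∨ a = 1) ((A *ᵥ x) i) with h | h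
  · simp [h]
  · have hflip : ∑ j, (1 + A i j).val + ∑ j, (A i j).val = Fintype.card ι := by
      rw [← sum_add_distrib, ← card_univ, card_eq_sum_ones]
      exact sum_congr rfl fun j _ => (by decide : ∀ b : ZMod 2, (1 + b).val + b.val = 1) _
    rw [h, ZMod.val_one]
    omega

end Hypercube

section Window

variable {n k : ℕ}

def windowMatrix (n k : ℕ) : Matrix (ZMod n) (ZMod n) (ZMod 2) :=
  fun i j => if (j - i).val < k then 1 else 0

lemma injOn_add_natCast (hk : k ≤ n) (i : ZMod n) :
    Set.InjOn (fun d : ℕ => i + d) (range k) := by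
  intro a ha b hb h
  simp only [coe_range, Set.mem_Iio] at ha hb
  simpa [ZMod.val_cast_of_lt (ha.trans_le hk), ZMod.val_cast_of_lt (hb.trans_le hk)] using
    congrArg ZMod.val (add_left_cancel h)

variable [NeZero n]

lemma filter_val_sub_lt_eq_image (hk : k ≤ n) (i : ZMod n) :
    univ.filter (fun j : ZMod n => (j - i).val < k) = (range k).image fun d : ℕ => i + d := by
  ext j
  simp only [mem_filter, mem_univ, true_and, mem_image, mem_range]
  constructor
  · exact fun h => ⟨(j - i).val, h, by rw [ZMod.natCast_zmod_val, add_sub_cancel]⟩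
  · rintro ⟨d, hd, rfl⟩
    rwa [add_sub_cancel_left, ZMod.val_cast_of_lt (hd.trans_le hk)]

lemma windowMatrix_mulVec (hk : k ≤ n) (w : ZMod n → ZMod 2) (i : ZMod n) :
    (windowMatrix n k *ᵥ w) i = ∑ d ∈ range k, w (i + d) := by
  simp only [mulVec, dotProduct, windowMatrix, ite_mul, one_mul, zero_mul]
  rw [← sum_filter, filter_val_sub_lt_eq_image hk, sum_image (injOn_add_natCast hk i)]

lemma sum_val_windowMatrix (hk : k ≤ n) (i : ZMod n) :
    ∑ j, (windowMatrix n k i j).val = k := by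
  simp only [windowMatrix, apply_ite ZMod.val, ZMod.val_one, ZMod.val_zero]
  rw [sum_boole, filter_val_sub_lt_eq_image hk, card_image_of_injOn (injOn_add_natCast hk i),
    card_range, Nat.cast_id]

lemma windowMatrix_mulVec_injective (hn : n + 1 = 2 * k) (hk : Odd k) :
    Function.Injective (windowMatrix n k).mulVec := by
  refine (injective_iff_map_eq_zero (windowMatrix n k).mulVecLin).mpr fun w hw => ?_
  have hwin : ∀ i, ∑ d ∈ range k, w (i + d) = 0 := fun i => by
    rw [← windowMatrix_mulVec (by omega)]
    exact congrFun hw i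
  have hperiod_k : Function.Periodic w k := fun i => by
    have hnext : ∑ d ∈ range k, w (i + (d + 1 : ℕ)) = 0 := by
      rw [← hwin (i + 1)]
      exact sum_congr rfl fun d _ => congrArg w (by push_cast; ring)
    have := sum_range_succ (fun d : ℕ => w (i + d)) k
    rw [sum_range_succ', hwin, hnext, zero_add, zero_add, Nat.cast_zero, add_zero] at this
    exact this.symm
  have hperiod_one : Function.Periodic w 1 := by
    have h2k : ((2 * k : ℕ) : ZMod n) = 1 := by
      rw [← hn, Nat.cast_succ, ZMod.natCast_self, zero_add]
    simpa only [← Nat.cast_mul, h2k] using hperiod_k.nat_mul 2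
  have hconst : ∀ u, w u = w 0 := fun u => by
    simpa using hperiod_one.nat_mul_eq u.val
  have h0 : w 0 = 0 := by
    have hk2 : (k : ZMod 2) ≠ 0 := by
      rwa [Ne, ZMod.natCast_eq_zero_iff_even, Nat.not_even_iff_odd]
    simpa [hconst, hk2] using hwin 0
  funext u
  rw [hconst, h0, Pi.zero_apply]

end Window

lemma mulVec_submatrix_equiv_injective {l m R : Type*} [Fintype l] [Fintype m] [Semiring R]
    {A : Matrix m m R} (hA : Function.Injective A.mulVec) (e : l ≃ m) :
    Function.Injective (A.submatrix e e).mulVec := by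
  intro v v' h
  rw [submatrix_mulVec_equiv, submatrix_mulVec_equiv] at h
  exact e.symm.surjective.injective_comp_right (hA (e.surjective.injective_comp_right h))

lemma exists_closedNbhd_sum_eq_of_mulVec_injective {n : ℕ} (A : Matrix (Fin n) (Fin n) (ZMod 2))
    (hinj : Function.Injective A.mulVec) (hA : ∀ i, 2 * ∑ j, (A i j).val = n + 1) :
    ∃ (f : (Fin n → ZMod 2) ≃ Fin (2 ^ n)) (k : ℕ),
      ∀ x : Fin n → ZMod 2,
        ∑ y ∈ univ.filter (fun y => hammingDist x y ≤ 1), ((f y : ℕ) + 1) = k := by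
  have hbij := Finite.injective_iff_bijective.mp hinj
  refine ⟨(Equiv.ofBijective _ hbij).trans finFunctionFinEquiv,
    ∑ i : Fin n, (∑ j, (A i j).val) * 2 ^ (i : ℕ) + (n + 1), fun x => ?_⟩
  have hlabel : ∀ y,
      (((Equiv.ofBijective _ hbij).trans finFunctionFinEquiv y : Fin (2 ^ n)) : ℕ) =
        ∑ i, ((A *ᵥ y) i).val * 2 ^ (i : ℕ) :=
    fun y => finFunctionFinEquiv_apply _
  simp only [hlabel, sum_add_distrib, sum_const, smul_eq_mul, mul_one,
    card_filter_hammingDist_le_one, Fintype.card_fin]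
  rw [sum_comm]
  congr 1
  refine sum_congr rfl fun i _ => ?_
  rw [← sum_mul, sum_filter_hammingDist_le_one_val_mulVec A i (by simpa using hA i)]

/-- If `n ≡ 1 (mod 4)`, the hypercube `Qₙ` admits a closed distance magic labeling. -/
theorem stmt_7 (n : ℕ) (hn : n % 4 = 1) :
    ∃ (f : (Fin n → ZMod 2) ≃ Fin (2 ^ n)) (k : ℕ),
      ∀ x : Fin n → ZMod 2,
        ∑ y ∈ Finset.univ.filter (fun y => hammingDist x y ≤ 1), ((f y : ℕ) + 1) = k := by
  have : NeZero n := ⟨by omega⟩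
  obtain ⟨k, hnk, hk⟩ : ∃ k, n + 1 = 2 * k ∧ Odd k := ⟨(n + 1) / 2, by omega, by
    rw [Nat.odd_iff]; omega⟩
  let e : Fin n ≃ ZMod n := (ZMod.finEquiv n).toEquiv
  refine exists_closedNbhd_sum_eq_of_mulVec_injective ((windowMatrix n k).submatrix e e)
    (mulVec_submatrix_equiv_injective (windowMatrix_mulVec_injective hnk hk) e) fun i => ?_
  change 2 * ∑ j, (windowMatrix n k (e i) (e j)).val = n + 1
  rw [e.sum_comp (fun j => (windowMatrix n k (e i) j).val), sum_val_windowMatrix (by omega), hnk]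
end

section
/- If the hypercube Qₙ admits a closed distance magic labeling, then n ≡ 1 (mod 4). -/
/-!
Let `W = walshMatrix n` be the character table of `𝔽₂ⁿ`, `W T x = (-1) ^ (T ⬝ᵥ x)`, so that
`W *ᵥ F` is the Walsh–Fourier transform of `F`. The closed-neighbourhood
operator `F ↦ ∑_{d(x,y) ≤ 1} F y` is convolution with the unit Hamming ball, so `W`
diagonalises it with eigenvalue `1 + n - 2|T|` on the character `T`. For a closed distance magic
labelling the image of `F` is constant, so `(1 + n - 2|T|) (W F)(T) = 0` for `T ≠ 0`, while at
`T = 0` it gives `(n + 1) · 2ⁿ(2ⁿ + 1)/2 = 2ⁿ k`, forcing `n` to be odd. If `n ≡ 3 (mod 4)`, the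
eigenvalue vanishes only at the even weight `(n + 1)/2`, so `W F` is supported on even weights.
Even-weight characters are invariant under translation by the all-ones vector `1`, hence
`F = F (· + 1)` because `W * W = 2ⁿ • 1`, contradicting injectivity of the labelling.
-/

open Finset Matrix

namespace Hypercube

def signChar : AddChar (ZMod 2) ℤ := AddChar.zmodChar 2 (by norm_num : (-1 : ℤ) ^ 2 = 1)

lemma signChar_eq_one_sub (a : ZMod 2) : signChar a = 1 - 2 * if a ≠ 0 then 1 else 0 := by
  fin_cases a <;> rfl

lemma signChar_eq_one_iff {a : ZMod 2} : signChar a = 1 ↔ a = 0 := by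
  rw [signChar_eq_one_sub]; fin_cases a <;> simp

lemma signChar_mul_self (a : ZMod 2) : signChar a * signChar a = 1 := by
  rw [← AddChar.map_add_eq_mul, CharTwo.add_self_eq_zero, AddChar.map_zero_eq_one]

variable {n : ℕ}

lemma sum_signChar_apply (T : Fin n → ZMod 2) :
    ∑ i, signChar (T i) = n - 2 * hammingNorm T := by
  simp only [signChar_eq_one_sub, sum_sub_distrib, ← mul_sum, sum_boole]
  simp [hammingNorm]

lemma sum_apply_eq_hammingNorm (T : Fin n → ZMod 2) : ∑ i, T i = hammingNorm T := by
  have h (a : ZMod 2) : a = if a ≠ 0 then 1 else 0 := by fin_cases a <;> rfl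
  rw [hammingNorm, ← sum_boole]
  exact sum_congr rfl fun i _ => h (T i)

lemma sum_signChar_dotProduct (v : Fin n → ZMod 2) :
    ∑ x, signChar (v ⬝ᵥ x) = if v = 0 then 2 ^ n else 0 := by
  let ψ := signChar.compAddMonoidHom (AddMonoidHom.mk' (v ⬝ᵥ ·) (dotProduct_add v))
  classical
  have hψ : ψ = 0 ↔ v = 0 := by
    refine ⟨fun h => ?_, fun h => ?_⟩
    · ext i
      simpa [ψ, signChar_eq_one_iff] using DFunLike.congr_fun h (Pi.single i 1)
    · ext x; simp [ψ, h]
  calc ∑ x, signChar (v ⬝ᵥ x) = ∑ x, ψ x := rfl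
    _ = _ := by rw [AddChar.sum_eq_ite, if_congr hψ rfl rfl]; simp

lemma add_eq_zero_iff_eq {T S : Fin n → ZMod 2} : T + S = 0 ↔ T = S := by
  rw [add_eq_zero_iff_eq_neg, show -S = S from funext fun i => ZMod.neg_eq_self_mod_two (S i)]

def walshMatrix (n : ℕ) : Matrix (Fin n → ZMod 2) (Fin n → ZMod 2) ℤ :=
  .of fun T x => signChar (T ⬝ᵥ x)

@[simp]
lemma walshMatrix_apply (T x : Fin n → ZMod 2) : walshMatrix n T x = signChar (T ⬝ᵥ x) := rfl

lemma walshMatrix_mulVec_apply (F : (Fin n → ZMod 2) → ℤ) (T : Fin n → ZMod 2) :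
    (walshMatrix n *ᵥ F) T = ∑ x, signChar (T ⬝ᵥ x) * F x := rfl

lemma walshMatrix_mul_self : walshMatrix n * walshMatrix n = (2 ^ n : ℤ) • 1 := by
  ext T S
  simp only [mul_apply, walshMatrix_apply, dotProduct_comm _ S, ← AddChar.map_add_eq_mul,
    ← add_dotProduct, sum_signChar_dotProduct, add_eq_zero_iff_eq, Matrix.smul_apply, one_apply]
  simp

lemma walshMatrix_mulVec_mulVec (F : (Fin n → ZMod 2) → ℤ) :
    walshMatrix n *ᵥ (walshMatrix n *ᵥ F) = (2 ^ n : ℤ) • F := by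
  rw [mulVec_mulVec, walshMatrix_mul_self, smul_mulVec, one_mulVec]

lemma eq_zero_of_walshMatrix_mulVec_eq_zero {F : (Fin n → ZMod 2) → ℤ}
    (hF : walshMatrix n *ᵥ F = 0) : F = 0 := by
  have h := walshMatrix_mulVec_mulVec F
  rw [hF, mulVec_zero, eq_comm, smul_eq_zero] at h
  exact h.resolve_left (by positivity)

lemma walshMatrix_mulVec_const (k : ℤ) (T : Fin n → ZMod 2) :
    (walshMatrix n *ᵥ fun _ => k) T = if T = 0 then 2 ^ n * k else 0 := by
  simp only [walshMatrix_mulVec_apply, ← Finset.sum_mul, sum_signChar_dotProduct]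
  split_ifs <;> simp

lemma walshMatrix_mulVec_zero (F : (Fin n → ZMod 2) → ℤ) :
    (walshMatrix n *ᵥ F) 0 = ∑ x, F x := by
  simp [walshMatrix_mulVec_apply]

lemma walshMatrix_mulVec_comp_add_right (F : (Fin n → ZMod 2) → ℤ) (a T : Fin n → ZMod 2) :
    (walshMatrix n *ᵥ fun x => F (x + a)) T = signChar (T ⬝ᵥ a) * (walshMatrix n *ᵥ F) T := by
  simp only [walshMatrix_mulVec_apply, Finset.mul_sum]
  refine Fintype.sum_equiv (Equiv.addRight a) _ _ fun x => ?_
  rw [Equiv.coe_addRight, dotProduct_add, AddChar.map_add_eq_mul, ← mul_assoc,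
    mul_comm _ (signChar _), ← mul_assoc, signChar_mul_self, one_mul]

lemma hammingNorm_le_one_iff {z : Fin n → ZMod 2} :
    hammingNorm z ≤ 1 ↔ z = 0 ∨ ∃ i, Pi.single i 1 = z := by
  refine ⟨fun hz => ?_, ?_⟩
  · by_cases h0 : z = 0
    · exact .inl h0
    obtain ⟨i, hi⟩ := Function.ne_iff.mp h0
    refine .inr ⟨i, funext fun j => ?_⟩
    rcases eq_or_ne j i with rfl | hji
    · exact (Pi.single_eq_same j 1).trans (Fin.eq_one_of_ne_zero _ hi).symm
    · rw [Pi.single_eq_of_ne hji, eq_comm]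
      by_contra hj
      exact hji (Finset.card_le_one.mp hz j (by simpa using hj) i (by simpa using hi))
  · rintro (rfl | ⟨i, rfl⟩)
    · simp
    · refine Finset.card_le_one.mpr fun a ha b hb => ?_
      simp only [mem_filter, mem_univ, true_and, Pi.single_apply, ne_eq, ite_eq_right_iff,
        one_ne_zero, imp_false, not_not] at ha hb
      rw [ha, hb]

lemma sum_hammingNorm_le_one (G : (Fin n → ZMod 2) → ℤ) :
    ∑ z with hammingNorm z ≤ 1, G z = G 0 + ∑ i, G (Pi.single i 1) := by
  have hball : ({z | hammingNorm z ≤ 1} : Finset (Fin n → ZMod 2)) =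
      insert 0 (univ.image fun i => Pi.single i 1) := by
    ext z; simp [hammingNorm_le_one_iff]
  rw [hball, sum_insert, sum_image]
  · exact fun i _ j _ h => by simpa [Pi.single_apply] using congrFun h i
  · simp

lemma hammingDist_add_right (x z : Fin n → ZMod 2) : hammingDist x (x + z) = hammingNorm z := by
  rw [hammingDist_eq_hammingNorm, neg_add_cancel_left]

def closedNbhdSum (F : (Fin n → ZMod 2) → ℤ) (x : Fin n → ZMod 2) : ℤ :=
  ∑ y with hammingDist x y ≤ 1, F y

lemma closedNbhdSum_eq (F : (Fin n → ZMod 2) → ℤ) (x : Fin n → ZMod 2) :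
    closedNbhdSum F x = F x + ∑ i, F (x + Pi.single i 1) := by
  have h := sum_hammingNorm_le_one fun z => F (x + z)
  rw [add_zero] at h
  rw [← h, closedNbhdSum, sum_filter, sum_filter]
  exact (Fintype.sum_equiv (Equiv.addLeft x) _ _ fun z => by simp [hammingDist_add_right]).symm

lemma walshMatrix_mulVec_closedNbhdSum (F : (Fin n → ZMod 2) → ℤ) (T : Fin n → ZMod 2) :
    (walshMatrix n *ᵥ closedNbhdSum F) T =
      (1 + n - 2 * hammingNorm T) * (walshMatrix n *ᵥ F) T := by
  have h : closedNbhdSum F = F + ∑ i, fun x => F (x + Pi.single i 1) := by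
    ext x; simp [closedNbhdSum_eq]
  simp only [h, mulVec_add, mulVec_sum, Pi.add_apply, Finset.sum_apply,
    walshMatrix_mulVec_comp_add_right, dotProduct_single, mul_one, ← sum_mul, sum_signChar_apply]
  ring

section ClosedDistanceMagic

variable {F : (Fin n → ZMod 2) → ℤ} {k : ℤ}

lemma mul_walshMatrix_mulVec_of_closedNbhdSum_eq (hF : ∀ x, closedNbhdSum F x = k)
    (T : Fin n → ZMod 2) :
    (1 + n - 2 * hammingNorm T) * (walshMatrix n *ᵥ F) T = if T = 0 then 2 ^ n * k else 0 := by
  rw [← walshMatrix_mulVec_closedNbhdSum, funext hF, walshMatrix_mulVec_const]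

lemma odd_of_closedNbhdSum_eq (hF : ∀ x, closedNbhdSum F x = k) (hn : 1 ≤ n)
    (hsum : 2 * ∑ x, F x = 2 ^ n * (2 ^ n + 1)) : Odd n := by
  have h0 := mul_walshMatrix_mulVec_of_closedNbhdSum_eq hF 0
  rw [walshMatrix_mulVec_zero, hammingNorm_zero, Nat.cast_zero, if_pos rfl] at h0
  have hk : (1 + n) * (2 ^ n + 1) = 2 * k := by
    refine mul_left_cancel₀ (pow_ne_zero n two_ne_zero : (2 : ℤ) ^ n ≠ 0) ?_
    linear_combination 2 * h0 - (1 + n) * hsum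
  have hpow : Even ((2 : ℤ) ^ n) := (Int.even_pow' (by omega)).mpr even_two
  have : Even ((1 + n : ℤ) * (2 ^ n + 1)) := hk ▸ even_two_mul k
  rw [Int.even_mul, ← Int.not_odd_iff_even (n := 2 ^ n + 1)] at this
  simpa [hpow, parity_simps] using this

lemma mod_four_ne_three_of_closedNbhdSum_eq (hF : ∀ x, closedNbhdSum F x = k)
    (hinj : Function.Injective F) : n % 4 ≠ 3 := by
  intro h3
  have hvanish : walshMatrix n *ᵥ (fun x => F x - F (x + 1)) = 0 := by
    ext T
    have hsub : (walshMatrix n *ᵥ (fun x => F x - F (x + 1))) T =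
        (1 - signChar (T ⬝ᵥ 1)) * (walshMatrix n *ᵥ F) T := by
      rw [show (fun x => F x - F (x + 1)) = F - fun x => F (x + 1) from rfl, mulVec_sub,
        Pi.sub_apply, walshMatrix_mulVec_comp_add_right]
      ring
    rw [hsub, Pi.zero_apply, dotProduct_one, sum_apply_eq_hammingNorm]
    rcases Nat.even_or_odd (hammingNorm T) with he | ho
    · rw [(ZMod.natCast_eq_zero_iff_even).mpr he, AddChar.map_zero_eq_one, sub_self, zero_mul]
    · have hT : T ≠ 0 := fun h => by simp [h] at ho
      have heig := mul_walshMatrix_mulVec_of_closedNbhdSum_eq hF T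
      rw [if_neg hT, mul_eq_zero] at heig
      rcases heig with h | h
      · obtain ⟨m, hm⟩ := ho
        omega
      · rw [h, mul_zero]
  have h01 := congrFun (eq_zero_of_walshMatrix_mulVec_eq_zero hvanish) 0
  rw [Pi.zero_apply, zero_add, sub_eq_zero] at h01
  exact zero_ne_one (congrFun (hinj h01) ⟨0, by omega⟩)

end ClosedDistanceMagic

lemma two_mul_sum_equiv_fin_add_one {α : Type*} [Fintype α] {m : ℕ} (f : α ≃ Fin m) :
    2 * ∑ y, ((f y : ℕ) + 1) = m * (m + 1) := by
  rw [Equiv.sum_comp f (fun j : Fin m => (j : ℕ) + 1), Fin.sum_univ_eq_sum_range (· + 1)]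
  calc 2 * ∑ i ∈ range m, (i + 1) = (∑ i ∈ range (m + 1), i) * 2 := by
        rw [sum_range_succ']; ring
    _ = m * (m + 1) := by rw [sum_range_id_mul_two, add_tsub_cancel_right, mul_comm]

end Hypercube

open Hypercube in
/-- If the hypercube `Qₙ` admits a closed distance magic labeling, then `n ≡ 1 (mod 4)`. -/
theorem stmt_8 (n : ℕ) (hn : 1 ≤ n)
    (h : ∃ (f : (Fin n → ZMod 2) ≃ Fin (2 ^ n)) (k : ℕ),
      ∀ x : Fin n → ZMod 2,
        ∑ y ∈ Finset.univ.filter (fun y => hammingDist x y ≤ 1), ((f y : ℕ) + 1) = k) :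
    n % 4 = 1 := by
  obtain ⟨f, k, hk⟩ := h
  let F : (Fin n → ZMod 2) → ℤ := fun y => (f y : ℕ) + 1
  have hF : ∀ x, closedNbhdSum F x = k := fun x => by
    simp only [closedNbhdSum, F]
    exact_mod_cast hk x
  have hinj : Function.Injective F := fun y z h => f.injective (Fin.ext (by simpa [F] using h))
  have hsum : 2 * ∑ x, F x = 2 ^ n * (2 ^ n + 1) := by
    simp only [F]
    exact_mod_cast two_mul_sum_equiv_fin_add_one f
  have hodd := Nat.odd_iff.mp (odd_of_closedNbhdSum_eq hF hn hsum)
  have h3 := mod_four_ne_three_of_closedNbhdSum_eq hF hinj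
  omega
end

section
/- Let n be odd, and let A₀, A₁, ..., Aₙ be the distance matrices of the hypercube Qₙ (so (A_i)_{uv} = 1 iff the Hamming distance between u and v is i). Then for every i with 0 ≤ 2i+1 ≤ n, the kernel of A₀ + A₁ is contained in the kernel of A_{2i} + A_{2i+1}. -/
/-- The `i`-th distance matrix of the hypercube `Qₙ` (over ℝ). -/
noncomputable def distMatrix (n i : ℕ) :
    Matrix (Fin n → ZMod 2) (Fin n → ZMod 2) ℝ :=
  fun u v => if hammingDist u v = i then 1 else 0

/-!
Counting the neighbours `w + eₖ` of `w` at distance `j + 1` from `u` gives the recurrence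
`A_{j+1} A₁ = (j + 2) A_{j+2} + (n - j) A_j` of the distance-regular graph `Qₙ`. If
`A₁ x = -x`, the vectors `y_j = A_j x` therefore satisfy
`y_{j+1} + (j + 2) y_{j+2} + (n - j) y_j = 0`; adding the instances `j = 2m` and `j = 2m + 1`
gives `(n - 2m)(y_{2m} + y_{2m+1}) + (2m + 3)(y_{2m+2} + y_{2m+3}) = 0`, so the pair sums
vanish by induction from `y₀ + y₁ = 0`.
-/

open Finset Function Matrix

theorem ZMod.two_eq_add_one_iff_ne (a b : ZMod 2) : a = b + 1 ↔ a ≠ b := by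
  revert a b; decide

theorem Pi.add_single_eq_update {ι : Type*} [DecidableEq ι] {β : ι → Type*}
    [∀ i, AddZeroClass (β i)] (w : ∀ i, β i) (k : ι) (b : β k) :
    w + Pi.single k b = update w k (w k + b) := by
  ext l
  rcases eq_or_ne l k with rfl | hl <;> simp [*]

section Hamming

variable {ι : Type*} [Fintype ι]

theorem card_filter_eq_add_hammingDist {β : ι → Type*} [∀ i, DecidableEq (β i)]
    (x y : ∀ i, β i) : #{k | x k = y k} + hammingDist x y = Fintype.card ι :=
  card_filter_add_card_filter_not _

variable [DecidableEq ι]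

-- Both sides are shifted so that no truncated subtraction occurs.
theorem hammingDist_update_add {β : ι → Type*} [∀ i, DecidableEq (β i)]
    (x y : ∀ i, β i) (k : ι) (a : β k) :
    hammingDist x (update y k a) + (if x k = y k then 0 else 1) =
      hammingDist x y + (if x k = a then 0 else 1) := by
  simp only [hammingDist, card_filter]
  rw [← add_sum_erase _ _ (mem_univ k), ← add_sum_erase _ _ (mem_univ k)]
  have hrest : ∑ l ∈ univ.erase k, (if x l ≠ update y k a l then 1 else 0) =
      ∑ l ∈ univ.erase k, (if x l ≠ y l then 1 else 0) :=
    sum_congr rfl fun l hl => by rw [update_of_ne (ne_of_mem_erase hl)]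
  rw [hrest, update_self]
  by_cases hy : x k = y k <;> by_cases ha : x k = a <;>
    simp only [hy, ha, ne_eq, ite_not, ↓reduceIte, add_zero, zero_add, not_true_eq_false,
      not_false_eq_true] <;> omega

theorem hammingDist_add_single_one (u w : ι → ZMod 2) (k : ι) :
    hammingDist u (w + Pi.single k 1) + (if u k = w k then 0 else 1) =
      hammingDist u w + (if u k = w k then 1 else 0) := by
  rw [Pi.add_single_eq_update, hammingDist_update_add]
  by_cases h : u k = w k <;> simp [h, ZMod.two_eq_add_one_iff_ne]

theorem hammingDist_eq_one_iff_exists_eq_add_single (v w : ι → ZMod 2) :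
    hammingDist v w = 1 ↔ ∃ k, v = w + Pi.single k 1 := by
  constructor
  · intro h
    obtain ⟨k, hk⟩ := card_eq_one.mp h
    have hdiff : ∀ l, v l ≠ w l ↔ l = k := by simpa [Finset.ext_iff] using hk
    refine ⟨k, ?_⟩
    rw [Pi.add_single_eq_update, eq_update_iff]
    exact ⟨(ZMod.two_eq_add_one_iff_ne _ _).mpr ((hdiff k).mpr rfl),
      fun l hl => not_not.mp fun h => hl ((hdiff l).mp h)⟩
  · rintro ⟨k, rfl⟩
    have := hammingDist_add_single_one w w k
    simp only [if_true, hammingDist_self] at this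
    rw [hammingDist_comm]
    omega

theorem sum_hammingDist_eq_one {M : Type*} [AddCommMonoid M] (w : ι → ZMod 2)
    (f : (ι → ZMod 2) → M) :
    ∑ v with hammingDist v w = 1, f v = ∑ k, f (w + Pi.single k 1) := by
  have hnbrs : ({v | hammingDist v w = 1} : Finset _) = univ.image (w + Pi.single · 1) := by
    ext v
    simp only [mem_filter, mem_univ, true_and, mem_image,
      hammingDist_eq_one_iff_exists_eq_add_single]
    exact exists_congr fun k => eq_comm
  rw [hnbrs, sum_image]
  intro k _ k' _ h
  by_contra hne
  simpa [hne] using congrFun (add_left_cancel h) k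

end Hamming

theorem add_eq_zero_of_recurrence {K M : Type*} [Field K] [CharZero K] [AddCommGroup M]
    [Module K M] {c : K} {y : ℕ → M}
    (hrec : ∀ j : ℕ, y (j + 1) + ((j : K) + 2) • y (j + 2) + (c - j) • y j = 0)
    (h0 : y 0 + y 1 = 0) (i : ℕ) : y (2 * i) + y (2 * i + 1) = 0 := by
  induction i with
  | zero => simpa using h0
  | succ m ih =>
    have hsum : (2 * (m : K) + 3) • (y (2 * m + 2) + y (2 * m + 3)) = 0 := by
      have hA := hrec (2 * m)
      have hB := hrec (2 * m + 1)
      push_cast at hA hB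
      linear_combination (norm := module) hA + hB - (c - 2 * m) • ih
    have hne : 2 * (m : K) + 3 ≠ 0 := by exact_mod_cast (by omega : 2 * m + 3 ≠ 0)
    rw [show 2 * (m + 1) = 2 * m + 2 by ring]
    exact (smul_eq_zero.mp hsum).resolve_left hne

theorem distMatrix_zero (n : ℕ) : distMatrix n 0 = 1 := by
  ext u v
  simp [distMatrix, Matrix.one_apply, hammingDist_eq_zero]

theorem distMatrix_succ_mul_distMatrix_one (n j : ℕ) :
    distMatrix n (j + 1) * distMatrix n 1 =
      ((j : ℝ) + 2) • distMatrix n (j + 2) + ((n : ℝ) - j) • distMatrix n j := by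
  ext u w
  have hstep : ∀ k, (if hammingDist u (w + Pi.single k 1) = j + 1 then (1 : ℝ) else 0) =
      if u k = w k then (if hammingDist u w = j then 1 else 0)
      else (if hammingDist u w = j + 2 then 1 else 0) := by
    intro k
    have := hammingDist_add_single_one u w k
    by_cases hk : u k = w k <;> simp only [hk, if_true, if_false] at this ⊢ <;>
      congr 1 <;> simp only [eq_iff_iff] <;> omega
  have hagree : (#{k | u k = w k} : ℝ) = n - hammingDist u w := by
    rw [eq_sub_iff_add_eq, ← Nat.cast_add, card_filter_eq_add_hammingDist, Fintype.card_fin]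
  have hdiffer : #{k | ¬u k = w k} = hammingDist u w := rfl
  simp only [Matrix.add_apply, Matrix.smul_apply, smul_eq_mul, Matrix.mul_apply, distMatrix,
    mul_ite, mul_one, mul_zero]
  rw [← sum_filter, sum_hammingDist_eq_one, sum_congr rfl fun k _ => hstep k, sum_ite,
    sum_const, sum_const, hdiffer, nsmul_eq_mul, nsmul_eq_mul, hagree]
  by_cases h₁ : hammingDist u w = j <;> by_cases h₂ : hammingDist u w = j + 2 <;>
    simp [h₁, h₂]

theorem distMatrix_mulVec_recurrence {n : ℕ} {x : (Fin n → ZMod 2) → ℝ}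
    (hx : (distMatrix n 0 + distMatrix n 1) *ᵥ x = 0) (j : ℕ) :
    distMatrix n (j + 1) *ᵥ x + ((j : ℝ) + 2) • distMatrix n (j + 2) *ᵥ x
      + ((n : ℝ) - j) • distMatrix n j *ᵥ x = 0 := by
  have hneg : distMatrix n 1 *ᵥ x = -x := by
    rw [distMatrix_zero, add_mulVec, one_mulVec] at hx
    exact eq_neg_of_add_eq_zero_right hx
  have h := congrArg (distMatrix n (j + 1) *ᵥ ·) hneg
  simp only [mulVec_mulVec, distMatrix_succ_mul_distMatrix_one, add_mulVec, smul_mulVec,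
    mulVec_neg] at h
  rw [add_assoc, h, add_neg_cancel]

theorem stmt_12_general (n : ℕ) (i : ℕ)
    (x : (Fin n → ZMod 2) → ℝ)
    (hx : (distMatrix n 0 + distMatrix n 1).mulVec x = 0) :
    (distMatrix n (2 * i) + distMatrix n (2 * i + 1)).mulVec x = 0 := by
  rw [add_mulVec]
  exact add_eq_zero_of_recurrence (y := fun j => distMatrix n j *ᵥ x)
    (distMatrix_mulVec_recurrence hx) (by rwa [← add_mulVec]) i

/-- For `n` odd and `2i+1 ≤ n`, `ker (A₀ + A₁) ⊆ ker (A_{2i} + A_{2i+1})`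
for the distance matrices of `Qₙ`. -/
theorem stmt_12 (n : ℕ) (hn : Odd n) (i : ℕ) (hi : 2 * i + 1 ≤ n)
    (x : (Fin n → ZMod 2) → ℝ)
    (hx : (distMatrix n 0 + distMatrix n 1).mulVec x = 0) :
    (distMatrix n (2 * i) + distMatrix n (2 * i + 1)).mulVec x = 0 :=
  stmt_12_general n i x hx
end

section
/- If n ≡ 1 (mod 4), then for each j with 0 ≤ j ≤ (n−1)/2, Qₙ admits a {j, n−j}-magic labeling. -/
/-!
Label `y ∈ 𝔽₂ⁿ` by one plus the integer with binary digits `y`. The antipode `y ↦ y + 1`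
complements every digit, so antipodal labels sum to `2ⁿ + 1`, and it maps the Hamming sphere of
radius `j` around `x` onto the sphere of radius `n - j`. For odd `n` and `j < n / 2` these two
spheres are disjoint, so the sum over their union is `#(sphere of radius j) * (2ⁿ + 1)`, and the
size of a sphere does not depend on its centre.
-/

open Finset

section HammingSphere

variable {ι β : Type*} [Fintype ι] [DecidableEq ι] [Fintype β] [DecidableEq β]

def hammingSphere (x : ι → β) (r : ℕ) : Finset (ι → β) :=
  univ.filter (hammingDist x · = r)

@[simp]
lemma mem_hammingSphere {x y : ι → β} {r : ℕ} : y ∈ hammingSphere x r ↔ hammingDist x y = r := by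
  simp [hammingSphere]

lemma disjoint_hammingSphere (x : ι → β) {r s : ℕ} (h : r ≠ s) :
    Disjoint (hammingSphere x r) (hammingSphere x s) :=
  disjoint_left.2 fun _ hr hs => h ((mem_hammingSphere.1 hr).symm.trans (mem_hammingSphere.1 hs))

lemma card_hammingSphere [AddGroup β] (x : ι → β) (r : ℕ) :
    #(hammingSphere x r) = #(hammingSphere (0 : ι → β) r) :=
  card_equiv (Equiv.addLeft (-x)) fun y => by
    simp [hammingDist_eq_hammingNorm]

end HammingSphere

section Antipode

variable {ι : Type*} [Fintype ι]

lemma hammingDist_add_one (x y : ι → ZMod 2) :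
    hammingDist x (y + 1) = Fintype.card ι - hammingDist x y := by
  have ne_add_one_iff (a b : ZMod 2) : a ≠ b + 1 ↔ a = b := by revert a b; decide
  have h := card_filter_add_card_filter_not (s := univ) fun i => x i = y i
  simp only [hammingDist, Pi.add_apply, Pi.one_apply, ne_add_one_iff, card_univ, ne_eq] at h ⊢
  omega

lemma map_add_one_hammingSphere [DecidableEq ι] (x : ι → ZMod 2) {r : ℕ}
    (hr : r ≤ Fintype.card ι) :
    (hammingSphere x r).map (Equiv.addRight 1).toEmbedding =
      hammingSphere x (Fintype.card ι - r) := by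
  have neg_one : -(1 : ι → ZMod 2) = 1 := funext fun _ => ZMod.neg_eq_self_mod_two 1
  ext y
  simp only [mem_map_equiv, Equiv.addRight_symm_apply, neg_one, mem_hammingSphere,
    hammingDist_add_one]
  have := hammingDist_le_card_fintype (x := x) (y := y)
  omega

end Antipode

def binaryLabel (n : ℕ) : (Fin n → ZMod 2) ≃ Fin (2 ^ n) := finFunctionFinEquiv

lemma binaryLabel_apply {n : ℕ} (y : Fin n → ZMod 2) :
    (binaryLabel n y : ℕ) = ∑ i, (y i).val * 2 ^ (i : ℕ) :=
  finFunctionFinEquiv_apply y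

lemma binaryLabel_add_binaryLabel_add_one {n : ℕ} (y : Fin n → ZMod 2) :
    (binaryLabel n y : ℕ) + binaryLabel n (y + 1) = 2 ^ n - 1 := by
  have digit_add (a : ZMod 2) : a.val + (a + 1).val = 1 := by revert a; decide
  rw [binaryLabel_apply, binaryLabel_apply, ← sum_add_distrib]
  simp only [Pi.add_apply, Pi.one_apply, ← add_mul, digit_add, one_mul]
  rw [Fin.sum_univ_eq_sum_range (2 ^ ·), Nat.geomSum_eq le_rfl, Nat.div_one]

/-- If `n ≡ 1 (mod 4)` then for each `j ≤ (n−1)/2`, the hypercube `Qₙ`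
admits a `{j, n−j}`-magic labeling. -/
theorem stmt_16 (n : ℕ) (hn : n % 4 = 1) (j : ℕ) (hj : j ≤ (n - 1) / 2) :
    ∃ (f : (Fin n → ZMod 2) ≃ Fin (2 ^ n)) (k : ℕ),
      ∀ x : Fin n → ZMod 2,
        ∑ y ∈ Finset.univ.filter
            (fun y => hammingDist x y = j ∨ hammingDist x y = n - j),
          ((f y : ℕ) + 1) = k := by
  refine ⟨binaryLabel n, #(hammingSphere (0 : Fin n → ZMod 2) j) * (2 ^ n + 1), fun x => ?_⟩
  have hantipode := map_add_one_hammingSphere x (r := j) (by rw [Fintype.card_fin]; omega)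
  rw [Fintype.card_fin] at hantipode
  have hpair (y : Fin n → ZMod 2) :
      ((binaryLabel n y : ℕ) + 1) + ((binaryLabel n (y + 1) : ℕ) + 1) = 2 ^ n + 1 := by
    have := binaryLabel_add_binaryLabel_add_one y
    have := Nat.one_le_two_pow (n := n)
    omega
  rw [filter_or]
  change ∑ y ∈ hammingSphere x j ∪ hammingSphere x (n - j), ((binaryLabel n y : ℕ) + 1) = _
  rw [sum_union (disjoint_hammingSphere x (by omega)), ← hantipode, sum_map, ← sum_add_distrib,
    ← card_hammingSphere x]
  exact sum_const_nat fun y _ => hpair y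
end

section
/- Let G be a distance-regular graph of diameter d that is an antipodal double cover (each vertex x has a unique vertex x' at distance d). If l is a distance magic labeling of G, then l(x) + l(x') = |V(G)| + 1 for every vertex x, and consequently l is a {j, d−j}-magic labeling for every j with 0 ≤ j ≤ d: for all x, ∑_{y ∈ G_j(x)} l(y) + ∑_{y ∈ G_{d−j}(x)} l(y) = (|V(G)|+1)·|G_j(x)|. -/
/-!
Write `A_j` for the distance-`j` matrix of `G`. Distance-regularity gives the three-term recurrence
`A_{j+1} A = b_j A_j + (b_0 - b_{j+1} - c_{j+1}) A_{j+1} + c_{j+2} A_{j+2}` with `c_{j+2} ≠ 0`,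
so every `A_j` maps each `A`-invariant subspace into itself. For a distance magic labeling `f` the
span of `1` and `f` is `A`-invariant, since `A f` and `A 1` are constant; as `A_d f = f ∘ a`, this
gives `f (a x) = p + q f x`. Applying this twice, `a` being an involution without fixed points and
`f` injective force `q = -1`, and summing over all vertices gives `p = |V| + 1`. The `{j, d - j}`
sums follow because `a` maps the sphere of radius `j` about `x` onto the sphere of radius `d - j`.
-/

open Finset Function Matrix

namespace SimpleGraph

variable {V : Type*} {G : SimpleGraph V}

theorem Reachable.exists_dist_eq_and_dist_eq_sub {u v : V} (hr : G.Reachable u v) {j : ℕ}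
    (hj : j ≤ G.dist u v) : ∃ w, G.dist u w = j ∧ G.dist w v = G.dist u v - j := by
  obtain ⟨p, hp⟩ := hr.exists_walk_length_eq_dist
  have hfst : G.dist u (p.getVert j) ≤ j := (dist_le (p.take j)).trans (by simp)
  have hsnd : G.dist (p.getVert j) v ≤ G.dist u v - j :=
    (dist_le (p.drop j)).trans (by simp [hp])
  have := Reachable.dist_triangle_left ⟨p.take j⟩ v
  exact ⟨p.getVert j, by omega, by omega⟩

theorem dist_add_dist_antipode {d : ℕ} {a : V → V} (hconn : G.Connected)
    (hdiam : ∀ x y, G.dist x y ≤ d)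
    (ha : ∀ x, G.dist x (a x) = d ∧ ∀ y, G.dist x y = d → y = a x)
    (hup : ∀ x y, G.dist x y < d → ∃ z, G.Adj y z ∧ G.dist x z = G.dist x y + 1) (x y : V) :
    G.dist x y + G.dist y (a x) = d := by
  induction h : d - G.dist x y generalizing y with
  | zero =>
    obtain rfl := (ha x).2 y (le_antisymm (hdiam x y) (by omega))
    rw [dist_self, add_zero, (ha x).1]
  | succ m ih =>
    obtain ⟨z, hyz, hz⟩ := hup x y (by omega)
    have := ih z (by omega)
    have h₁ := hconn.dist_triangle (u := y) (v := z) (w := a x)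
    have h₂ := hconn.dist_triangle (u := x) (v := y) (w := a x)
    rw [dist_eq_one_iff_adj.2 hyz] at h₁
    rw [(ha x).1] at h₂
    omega

theorem sum_filter_dist_sub_eq_sum_comp [Fintype V] {M : Type*} [AddCommMonoid M] {d : ℕ}
    {a : V → V} (ha : Involutive a) (hdist : ∀ x y, G.dist x y + G.dist y (a x) = d)
    (g : V → M) {j : ℕ} (hj : j ≤ d) (x : V) :
    ∑ y with G.dist x y = d - j, g y = ∑ y with G.dist x y = j, g (a y) := by
  refine (sum_equiv ha.toPerm (fun y => ?_) fun _ _ => rfl).symm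
  have := hdist y x
  simp only [mem_filter, mem_univ, true_and, Involutive.coe_toPerm, dist_comm (u := y)] at this ⊢
  omega

variable (R : Type*) (G) in
noncomputable def distMatrix [Zero R] [One R] (j : ℕ) : Matrix V V R :=
  of fun x y => if G.dist x y = j then 1 else 0

section DistMatrix

variable {R : Type*}

@[simp]
theorem distMatrix_apply [Zero R] [One R] (j : ℕ) (x y : V) :
    G.distMatrix R j x y = if G.dist x y = j then 1 else 0 :=
  rfl

theorem distMatrix_zero [DecidableEq V] [Zero R] [One R] (hconn : G.Connected) :
    G.distMatrix R 0 = 1 := by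
  ext x y
  simp [one_apply, hconn.dist_eq_zero_iff]

theorem distMatrix_one [DecidableRel G.Adj] [Zero R] [One R] :
    G.distMatrix R 1 = G.adjMatrix R := by
  ext x y
  simp

theorem distMatrix_mulVec_apply [Fintype V] [NonAssocSemiring R] (j : ℕ) (v : V → R) (x : V) :
    (G.distMatrix R j *ᵥ v) x = ∑ y with G.dist x y = j, v y := by
  simp [mulVec, dotProduct, sum_filter]

end DistMatrix

variable [Fintype V] [DecidableRel G.Adj]

variable (G) in
structure IsDistanceRegularWith (b c : ℕ → ℕ) : Prop where
  card_filter_dist_succ :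
    ∀ x y, #{z ∈ G.neighborFinset y | G.dist x z = G.dist x y + 1} = b (G.dist x y)
  card_filter_dist_pred :
    ∀ x y, #{z ∈ G.neighborFinset y | G.dist x z + 1 = G.dist x y} = c (G.dist x y)

namespace IsDistanceRegularWith

variable {b c : ℕ → ℕ}

theorem isRegularOfDegree (hG : G.IsDistanceRegularWith b c) : G.IsRegularOfDegree (b 0) := by
  intro x
  have h := hG.card_filter_dist_succ x x
  rw [dist_self, filter_true_of_mem fun z hz => by simpa using hz] at h
  rwa [← card_neighborFinset_eq_degree]

theorem card_filter_dist_eq_self (hG : G.IsDistanceRegularWith b c) (x w : V) :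
    #{z ∈ G.neighborFinset w | G.dist x z = G.dist x w} =
      b 0 - b (G.dist x w) - c (G.dist x w) := by
  have hsplit : #(G.neighborFinset w) = #{z ∈ G.neighborFinset w | G.dist x z = G.dist x w}
      + #{z ∈ G.neighborFinset w | G.dist x z = G.dist x w + 1}
      + #{z ∈ G.neighborFinset w | G.dist x z + 1 = G.dist x w} := by
    rw [card_eq_sum_ones, card_filter, card_filter, card_filter, ← sum_add_distrib,
      ← sum_add_distrib]
    refine sum_congr rfl fun z hz => ?_
    rcases ((mem_neighborFinset ..).1 hz).diff_dist_adj (u := x) with h | h | h <;>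
      split_ifs <;> omega
  rw [card_neighborFinset_eq_degree, hG.isRegularOfDegree w, hG.card_filter_dist_succ,
    hG.card_filter_dist_pred] at hsplit
  omega

theorem card_filter_dist_eq_succ (hG : G.IsDistanceRegularWith b c) (x w : V) (j : ℕ) :
    #{z ∈ G.neighborFinset w | G.dist x z = j + 1} =
      if G.dist x w = j then b j
      else if G.dist x w = j + 1 then b 0 - b (j + 1) - c (j + 1)
      else if G.dist x w = j + 2 then c (j + 2) else 0 := by
  split_ifs with h₀ h₁ h₂
  · subst h₀
    exact hG.card_filter_dist_succ x w
  · rw [← h₁]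
    exact hG.card_filter_dist_eq_self x w
  · rw [← h₂, ← hG.card_filter_dist_pred x w]
    congr 1
    exact filter_congr fun z _ => by omega
  · refine card_eq_zero.2 (filter_eq_empty_iff.2 fun z hz => ?_)
    rcases ((mem_neighborFinset ..).1 hz).diff_dist_adj (u := x) with h | h | h <;> omega

theorem distMatrix_succ_mul_adjMatrix {R : Type*} [NonAssocSemiring R]
    (hG : G.IsDistanceRegularWith b c) (j : ℕ) :
    G.distMatrix R (j + 1) * G.adjMatrix R = b j • G.distMatrix R j
      + (b 0 - b (j + 1) - c (j + 1)) • G.distMatrix R (j + 1)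
      + c (j + 2) • G.distMatrix R (j + 2) := by
  ext x w
  rw [mul_adjMatrix_apply]
  simp only [distMatrix_apply, Matrix.add_apply, Matrix.smul_apply, smul_ite, nsmul_one,
    smul_zero]
  rw [sum_boole, hG.card_filter_dist_eq_succ]
  split_ifs <;> first | omega | simp

theorem c_ne_zero (hG : G.IsDistanceRegularWith b c) {x y : V} {j : ℕ} (hxy : G.dist x y = j)
    (hj : 1 ≤ j) : c j ≠ 0 := by
  have hyx : G.dist y x = j := by rw [dist_comm, hxy]
  obtain ⟨z, hz, hzx⟩ := (Reachable.of_dist_ne_zero (by omega : G.dist y x ≠ 0)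
    ).exists_dist_eq_and_dist_eq_sub (j := 1) (by omega)
  rw [← hxy, ← hG.card_filter_dist_pred, ← Nat.pos_iff_ne_zero]
  exact card_pos.2 ⟨z, mem_filter.2 ⟨(mem_neighborFinset ..).2 (dist_eq_one_iff_adj.1 hz),
    by rw [dist_comm]; omega⟩⟩

theorem distMatrix_mulVec_mem [DecidableEq V] {K : Type*} [Field K] [CharZero K]
    (hG : G.IsDistanceRegularWith b c) (hconn : G.Connected) {d : ℕ}
    (hcd : ∀ j, 1 ≤ j → j ≤ d → c j ≠ 0) {M : Submodule K (V → K)}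
    (hM : ∀ v ∈ M, G.adjMatrix K *ᵥ v ∈ M) {j : ℕ} (hj : j ≤ d) {v : V → K}
    (hv : v ∈ M) : G.distMatrix K j *ᵥ v ∈ M := by
  induction j using Nat.strong_induction_on generalizing v with
  | _ j ih =>
    rcases j with _ | _ | j
    · rwa [distMatrix_zero hconn, one_mulVec]
    · rw [distMatrix_one]
      exact hM v hv
    · have hrec := congrArg (· *ᵥ v) (hG.distMatrix_succ_mul_adjMatrix (R := K) j)
      simp only [← mulVec_mulVec, add_mulVec, smul_mulVec] at hrec
      have hcK : (c (j + 2) : K) ≠ 0 := Nat.cast_ne_zero.2 (hcd _ (by omega) hj)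
      rw [← M.smul_mem_iff hcK, Nat.cast_smul_eq_nsmul, eq_sub_of_add_eq' hrec.symm]
      refine sub_mem (ih _ (by omega) (by omega) (hM v hv)) (add_mem ?_ ?_) <;>
        exact nsmul_mem (ih _ (by omega) (by omega) hv) _

variable {d : ℕ} {a : V → V}

theorem exists_adj_dist_succ (hG : G.IsDistanceRegularWith b c) (hconn : G.Connected)
    (ha : ∀ x, G.dist x (a x) = d) {x y : V} (hxy : G.dist x y < d) :
    ∃ z, G.Adj y z ∧ G.dist x z = G.dist x y + 1 := by
  have hxa := ha x
  obtain ⟨y', hy', hy'a⟩ :=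
    (hconn x (a x)).exists_dist_eq_and_dist_eq_sub (j := G.dist x y) (by omega)
  obtain ⟨z', hz', hz'a⟩ :=
    (hconn y' (a x)).exists_dist_eq_and_dist_eq_sub (j := 1) (by omega)
  have h₁ := hconn.dist_triangle (u := x) (v := y') (w := z')
  have h₂ := hconn.dist_triangle (u := x) (v := z') (w := a x)
  have hpos : 0 < b (G.dist x y) := by
    rw [← hy', ← hG.card_filter_dist_succ]
    exact card_pos.2 ⟨z', mem_filter.2
      ⟨(mem_neighborFinset ..).2 (dist_eq_one_iff_adj.1 hz'), by omega⟩⟩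
  rw [← hG.card_filter_dist_succ, card_pos] at hpos
  obtain ⟨z, hz⟩ := hpos
  rw [mem_filter, mem_neighborFinset] at hz
  exact ⟨z, hz⟩

theorem exists_comp_antipode_eq_affine [DecidableEq V] {K : Type*} [Field K] [CharZero K]
    (hG : G.IsDistanceRegularWith b c) (hconn : G.Connected)
    (ha : ∀ x, G.dist x (a x) = d ∧ ∀ y, G.dist x y = d → y = a x)
    {f : V → K} {k : K} (hf : ∀ x, ∑ y ∈ G.neighborFinset x, f y = k) :
    ∃ p q : K, ∀ x, f (a x) = p + q * f x := by
  set M := Submodule.span K {1, f}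
  have hle : M ≤ M.comap (G.adjMatrix K).mulVecLin := by
    refine Submodule.span_le.2 (Set.insert_subset_iff.2 ⟨?_, Set.singleton_subset_iff.2 ?_⟩)
    · have h₁ : G.adjMatrix K *ᵥ 1 = (b 0 : K) • 1 := by
        ext x
        simp [hG.isRegularOfDegree x]
      simpa [h₁] using M.smul_mem _ (Submodule.subset_span (by simp))
    · have hf' : G.adjMatrix K *ᵥ f = k • 1 := by
        ext x
        simp [hf]
      simpa [hf'] using M.smul_mem k (Submodule.subset_span (by simp))
  have hcd : ∀ j, 1 ≤ j → j ≤ d → c j ≠ 0 := fun j hj hjd => by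
    obtain ⟨x⟩ := hconn.nonempty
    obtain ⟨y, hy, -⟩ :=
      (hconn x (a x)).exists_dist_eq_and_dist_eq_sub (j := j) (by rw [(ha x).1]; exact hjd)
    exact hG.c_ne_zero hy hj
  obtain ⟨p, q, h⟩ := Submodule.mem_span_pair.1 <| hG.distMatrix_mulVec_mem (M := M) hconn hcd
    (fun v hv => hle hv) le_rfl (Submodule.subset_span (by simp) : f ∈ M)
  refine ⟨p, q, fun x => ?_⟩
  have hsphere : ({y | G.dist x y = d} : Finset V) = {a x} :=
    eq_singleton_iff_unique_mem.2
      ⟨by simpa using (ha x).1, fun y hy => (ha x).2 y (mem_filter.1 hy).2⟩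
  have hx := congrFun h x
  rw [distMatrix_mulVec_apply, hsphere, sum_singleton] at hx
  simpa using hx.symm

end IsDistanceRegularWith

end SimpleGraph

theorem sum_label_add_one_mul_two {V : Type*} [Fintype V] {n : ℕ} (l : V ≃ Fin n) :
    (∑ x, ((l x : ℕ) + 1)) * 2 = n * (n + 1) := by
  rw [l.sum_comp (fun i : Fin n => (i : ℕ) + 1), Fin.sum_univ_eq_sum_range (· + 1)]
  have := sum_range_id_mul_two (n + 1)
  rw [sum_range_succ'] at this
  simpa [mul_comm] using this

theorem label_add_label_eq_of_affine {V : Type*} [Fintype V] {n : ℕ} (l : V ≃ Fin n)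
    {a : V → V} (ha : Involutive a) {x₀ : V} (hx₀ : a x₀ ≠ x₀) {p q : ℚ}
    (h : ∀ x, ((l (a x) : ℕ) + 1 : ℚ) = p + q * ((l x : ℕ) + 1)) (x : V) :
    (l x : ℕ) + 1 + ((l (a x) : ℕ) + 1) = n + 1 := by
  set f : V → ℚ := fun x => (l x : ℕ) + 1
  have hne : f x₀ - f (a x₀) ≠ 0 := by
    simpa [f, sub_eq_zero, Fin.val_inj] using hx₀.symm
  have hq : q = -1 := by
    have h₁ := h x₀
    have h₂ := h (a x₀)
    rw [ha x₀] at h₂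
    have : (q + 1) * (f x₀ - f (a x₀)) = 0 := by linear_combination h₂ - h₁
    linear_combination (mul_eq_zero.1 this).resolve_right hne
  have hpair : ∀ x, f x + f (a x) = p := fun x => by linear_combination h x + f x * hq
  have hn : (n : ℚ) ≠ 0 := by
    have := (l x₀).pos
    positivity
  have hsum : (n : ℚ) * p = n * (n + 1) := by
    have hcomp : ∑ x, f (a x) = ∑ x, f x := ha.bijective.sum_comp f
    have hgauss : (∑ x, f x) * 2 = n * (n + 1) := by
      simp only [f]
      exact_mod_cast sum_label_add_one_mul_two l
    calc (n : ℚ) * p = ∑ x, (f x + f (a x)) := by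
          rw [sum_congr rfl fun x _ => hpair x, sum_const, card_univ, Fintype.card_congr l,
            Fintype.card_fin, nsmul_eq_mul]
      _ = n * (n + 1) := by rw [sum_add_distrib, hcomp, ← hgauss]; ring
  have hx := hpair x
  rw [mul_left_cancel₀ hn hsum] at hx
  simp only [f] at hx
  exact_mod_cast hx

open SimpleGraph

/-- Let `G` be a distance-regular graph of diameter `d` which is an antipodal double cover
(with antipodal map `a`). If `l` is a distance magic labeling of `G`, then
`l(x) + l(x') = |V(G)| + 1` for every `x`, and consequently for every `j ≤ d` and every `x`,
`∑_{y : d(x,y)=j} l(y) + ∑_{y : d(x,y)=d−j} l(y) = (|V(G)|+1)·|G_j(x)|`,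
i.e. `l` is a `{j, d−j}`-magic labeling. -/
theorem stmt_17 {V : Type*} [Fintype V] [DecidableEq V]
    (G : SimpleGraph V) [DecidableRel G.Adj] (hconn : G.Connected)
    (d : ℕ) (hdiam : ∀ x y : V, G.dist x y ≤ d)
    -- distance-regularity: intersection numbers b, c
    (b c : ℕ → ℕ)
    (hb : ∀ x y : V,
      ((G.neighborFinset y).filter (fun z => G.dist x z = G.dist x y + 1)).card
        = b (G.dist x y))
    (hc : ∀ x y : V,
      ((G.neighborFinset y).filter (fun z => G.dist x z + 1 = G.dist x y)).card
        = c (G.dist x y))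
    -- antipodal double cover: `a x` is the unique vertex at distance `d` from `x`
    (a : V → V)
    (ha : ∀ x : V, G.dist x (a x) = d ∧ ∀ y : V, G.dist x y = d → y = a x)
    -- `l` is a distance magic labeling
    (l : V ≃ Fin (Fintype.card V)) (k : ℕ)
    (hmagic : ∀ x : V, ∑ y ∈ G.neighborFinset x, ((l y : ℕ) + 1) = k) :
    (∀ x : V, ((l x : ℕ) + 1) + ((l (a x) : ℕ) + 1) = Fintype.card V + 1) ∧
    ∀ j : ℕ, j ≤ d → ∀ x : V,
      (∑ y ∈ Finset.univ.filter (fun y => G.dist x y = j), ((l y : ℕ) + 1))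
        + (∑ y ∈ Finset.univ.filter (fun y => G.dist x y = d - j), ((l y : ℕ) + 1))
      = (Fintype.card V + 1) * (Finset.univ.filter (fun y => G.dist x y = j)).card := by
  have hG : G.IsDistanceRegularWith b c := ⟨hb, hc⟩
  have hinv : Involutive a := fun x => ((ha (a x)).2 x (by rw [dist_comm, (ha x).1])).symm
  have hdist := dist_add_dist_antipode hconn hdiam ha fun x y =>
    hG.exists_adj_dist_succ hconn (fun x => (ha x).1)
  have hpair : ∀ x, (l x : ℕ) + 1 + ((l (a x) : ℕ) + 1) = Fintype.card V + 1 := by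
    obtain ⟨x₀⟩ := hconn.nonempty
    by_cases hx₀ : a x₀ = x₀
    · have hd : d = 0 := by rw [← (ha x₀).1, hx₀, dist_self]
      have hV : Fintype.card V = 1 := Fintype.card_eq_one_iff.2
        ⟨x₀, fun y => hconn.dist_eq_zero_iff.1 (by have := hdiam y x₀; omega)⟩
      intro x
      have := (l x).isLt
      have := (l (a x)).isLt
      omega
    · obtain ⟨p, q, h⟩ := hG.exists_comp_antipode_eq_affine (K := ℚ) hconn ha
        (f := fun y => ((l y : ℕ) : ℚ) + 1) (k := k) fun x => by exact_mod_cast hmagic x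
      exact label_add_label_eq_of_affine l hinv hx₀ h
  refine ⟨hpair, fun j hj x => ?_⟩
  rw [sum_filter_dist_sub_eq_sum_comp hinv hdist _ hj, ← sum_add_distrib,
    sum_congr rfl fun y _ => hpair y, sum_const, smul_eq_mul, mul_comm]
end

section
/- If n ≡ 2 (mod 4) and the hypercube Qₙ admits a distance magic labeling l, then l(x) + l(x̄) = 2ⁿ + 1 for every vertex x, where x̄ = x + 𝟏 is the antipode of x; and the hypercube Qₙ admits no distance magic labeling when n is even and n ≢ 2 (mod 4). -/
/-!
Expand `f(x) = l(x) + 1` in the Walsh basis `χ_s(x) = (-1)^(s·x)` of `ℤ^(𝔽₂ⁿ)`. The neighbour-sum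
operator of `Qₙ` acts on `χ_s` by the eigenvalue `n - 2|s|`, and it sends `f` to a constant, so
every Walsh coefficient of `f` with `s ≠ 0` vanishes unless `|s| = n/2`. Translating by `𝟏`
multiplies `χ_s` by `(-1)^|s|`, which is the same sign `(-1)^(n/2)` on all surviving coefficients
with `s ≠ 0`. By Fourier inversion, `f(x̄) = (-1)^(n/2) f(x) + c` with `c` fixed by `∑ f`: for
`n ≡ 2 (mod 4)` this gives `f(x) + f(x̄) = 2ⁿ + 1`, and for `n ≡ 0 (mod 4)` it gives
`f(x̄) = f(x)`, contradicting injectivity.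
-/

open Finset

lemma ZMod.eq_one_iff_ne_zero_mod_two {a : ZMod 2} : a = 1 ↔ a ≠ 0 := by
  revert a; decide

lemma Equiv.sum_val_add_one_mul_two {α : Type*} [Fintype α] {m : ℕ} (l : α ≃ Fin m) :
    (∑ x, ((l x : ℕ) + 1)) * 2 = m * (m + 1) := by
  have gauss := sum_range_id_mul_two (m + 1)
  rw [sum_range_succ', add_zero, add_tsub_cancel_right] at gauss
  rw [Equiv.sum_comp l (fun j => (j : ℕ) + 1), Fin.sum_univ_eq_sum_range (fun j => j + 1)]
  linarith

namespace Hypercube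

variable {ι : Type*} [Fintype ι]

def walsh (s : ι → ZMod 2) : AddChar (ι → ZMod 2) ℤ where
  toFun x := (-1) ^ (s ⬝ᵥ x).val
  map_zero_eq_one' := by simp
  map_add_eq_mul' x y := by
    rw [dotProduct_add, ZMod.val_add, ← neg_one_pow_eq_pow_mod_two, pow_add]

lemma walsh_apply (s x : ι → ZMod 2) : walsh s x = (-1) ^ (s ⬝ᵥ x).val := rfl

@[simp]
lemma walsh_zero : walsh (0 : ι → ZMod 2) = 0 := by
  ext x
  simp [walsh_apply]

lemma walsh_comm (s x : ι → ZMod 2) : walsh s x = walsh x s := by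
  rw [walsh_apply, walsh_apply, dotProduct_comm]

lemma walsh_one (s : ι → ZMod 2) : walsh s 1 = (-1) ^ hammingNorm s := by
  have hsum : ∑ i, s i = (hammingNorm s : ZMod 2) := by
    rw [hammingNorm, ← sum_boole]
    refine sum_congr rfl fun i _ => ?_
    generalize s i = a
    revert a; decide
  rw [walsh_apply, dotProduct_one, hsum, ZMod.val_natCast, ← neg_one_pow_eq_pow_mod_two]

lemma sum_neg_one_pow_val (s : ι → ZMod 2) :
    ∑ i, (-1 : ℤ) ^ (s i).val = Fintype.card ι - 2 * hammingNorm s := by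
  have hsign : ∀ a : ZMod 2, (-1 : ℤ) ^ a.val = 1 - 2 * if a ≠ 0 then 1 else 0 := by decide
  simp only [hsign, sum_sub_distrib, ← mul_sum, sum_boole, hammingNorm]
  simp

variable [DecidableEq ι]

lemma walsh_single (s : ι → ZMod 2) (i : ι) : walsh s (Pi.single i 1) = (-1) ^ (s i).val := by
  rw [walsh_apply, dotProduct_single, mul_one]

lemma sum_walsh (s : ι → ZMod 2) :
    ∑ x, walsh s x = if s = 0 then 2 ^ Fintype.card ι else 0 := by
  split_ifs with hs
  · simp [hs]
  · refine AddChar.sum_eq_zero_iff_ne_zero.mpr (AddChar.ne_zero_iff.mpr ?_)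
    obtain ⟨i, hi⟩ := Function.ne_iff.mp hs
    refine ⟨Pi.single i 1, ?_⟩
    rw [walsh_single, ZMod.eq_one_iff_ne_zero_mod_two.mpr hi]
    decide

lemma sum_walsh_apply (x : ι → ZMod 2) :
    ∑ s, walsh s x = if x = 0 then 2 ^ Fintype.card ι else 0 := by
  simp only [walsh_comm _ x, sum_walsh]

def walshTransform (f : (ι → ZMod 2) → ℤ) (s : ι → ZMod 2) : ℤ := ∑ x, walsh s x * f x

lemma walshTransform_zero (f : (ι → ZMod 2) → ℤ) : walshTransform f 0 = ∑ x, f x := by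
  simp [walshTransform]

lemma sum_walsh_mul_walshTransform (f : (ι → ZMod 2) → ℤ) (x : ι → ZMod 2) :
    ∑ s, walsh s x * walshTransform f s = 2 ^ Fintype.card ι * f x := by
  calc ∑ s, walsh s x * walshTransform f s
      = ∑ y, (∑ s, walsh s (x + y)) * f y := by
        simp only [walshTransform, mul_sum, sum_mul, AddChar.map_add_eq_mul, mul_assoc]
        exact sum_comm
    _ = 2 ^ Fintype.card ι * f x := by
        simp [sum_walsh_apply, add_eq_zero_iff_eq_neg, ZModModule.neg_eq_self]

lemma hammingNorm_eq_one_iff {d : ι → ZMod 2} :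
    hammingNorm d = 1 ↔ ∃ i, Pi.single i 1 = d := by
  constructor
  · intro h
    obtain ⟨i, hi⟩ := card_eq_one.mp h
    refine ⟨i, funext fun j => ?_⟩
    have hj : d j ≠ 0 ↔ j = i := by simpa using congrArg (j ∈ ·) hi
    by_cases hji : j = i
    · subst hji
      rw [Pi.single_eq_same, ZMod.eq_one_iff_ne_zero_mod_two.mpr (hj.mpr rfl)]
    · simp [hji, not_not.mp (mt hj.mp hji)]
  · rintro ⟨i, rfl⟩
    simp [hammingNorm, Pi.single_apply, filter_eq']

lemma sum_hammingDist_eq_one {M : Type*} [AddCommMonoid M] (g : (ι → ZMod 2) → M)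
    (x : ι → ZMod 2) :
    ∑ y ∈ univ.filter (fun y => hammingDist x y = 1), g y = ∑ i, g (x + Pi.single i 1) := by
  have hneighbors : univ.filter (fun y => hammingDist x y = 1) =
      univ.image (fun i => x + Pi.single i 1) := by
    ext y
    simp only [mem_filter, mem_univ, true_and, mem_image, hammingDist_eq_hammingNorm,
      hammingNorm_eq_one_iff, eq_neg_add_iff_add_eq]
  have hinj : Function.Injective (fun i : ι => x + Pi.single (M := fun _ => ZMod 2) i 1) := by
    intro i j hij
    by_contra hne
    simpa [Pi.single_apply, hne] using congrFun (add_left_cancel hij) i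
  rw [hneighbors, sum_image hinj.injOn]

def neighborSum (f : (ι → ZMod 2) → ℤ) (x : ι → ZMod 2) : ℤ := ∑ i, f (x + Pi.single i 1)

lemma neighborSum_natCast_eq {g : (ι → ZMod 2) → ℕ} {k : ℕ}
    (hg : ∀ x, ∑ y ∈ univ.filter (fun y => hammingDist x y = 1), g y = k) (x : ι → ZMod 2) :
    neighborSum (fun y => (g y : ℤ)) x = k := by
  rw [neighborSum, ← hg x, Nat.cast_sum, sum_hammingDist_eq_one]

lemma walshTransform_neighborSum (f : (ι → ZMod 2) → ℤ) (s : ι → ZMod 2) :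
    walshTransform (neighborSum f) s =
      (Fintype.card ι - 2 * hammingNorm s) * walshTransform f s := by
  have hshift : ∀ i, ∑ x, walsh s x * f (x + Pi.single i 1) =
      (-1) ^ (s i).val * walshTransform f s := by
    intro i
    rw [← Equiv.sum_comp (Equiv.addRight (Pi.single i 1)), walshTransform, mul_sum]
    simp only [Equiv.coe_addRight, add_assoc, ZModModule.add_self, add_zero,
      AddChar.map_add_eq_mul, walsh_single]
    exact sum_congr rfl fun x _ => by ring
  calc walshTransform (neighborSum f) s
      = ∑ i, ∑ x, walsh s x * f (x + Pi.single i 1) := by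
        simp only [walshTransform, neighborSum, mul_sum]
        exact sum_comm
    _ = ∑ i, (-1) ^ (s i).val * walshTransform f s := sum_congr rfl fun i _ => hshift i
    _ = (Fintype.card ι - 2 * hammingNorm s) * walshTransform f s := by
        rw [← sum_mul, sum_neg_one_pow_val]

section ConstantNeighborSum

variable {f : (ι → ZMod 2) → ℤ} {k : ℤ} (hf : ∀ x, neighborSum f x = k)
include hf

lemma walshTransform_eq_zero_of_neighborSum_eq {s : ι → ZMod 2} (hs : s ≠ 0) :
    (Fintype.card ι - 2 * hammingNorm s) * walshTransform f s = 0 := by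
  rw [← walshTransform_neighborSum, funext hf, walshTransform, ← sum_mul, sum_walsh, if_neg hs,
    zero_mul]

lemma pow_card_mul_apply_add_one {w : ℕ} (hw : Fintype.card ι = 2 * w) (x : ι → ZMod 2) :
    2 ^ Fintype.card ι * f (x + 1) =
      (-1) ^ w * (2 ^ Fintype.card ι * f x) + (1 - (-1) ^ w) * ∑ y, f y := by
  -- A coefficient with `s ≠ 0` survives only if `|s| = w`, where `χ_s(𝟏) = (-1)^w`.
  have hsign : ∀ s : ι → ZMod 2, walsh s 1 * walshTransform f s =
      (-1) ^ w * walshTransform f s + if s = 0 then (1 - (-1) ^ w) * walshTransform f 0 else 0 := by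
    intro s
    by_cases hs : s = 0
    · subst hs
      simp only [walsh_zero, AddChar.zero_apply, if_true]
      ring
    rw [if_neg hs, add_zero]
    rcases mul_eq_zero.mp (walshTransform_eq_zero_of_neighborSum_eq hf hs) with hweight | hzero
    · rw [walsh_one, show hammingNorm s = w by omega]
    · rw [hzero, mul_zero, mul_zero]
  calc 2 ^ Fintype.card ι * f (x + 1)
      = ∑ s, walsh s x * (walsh s 1 * walshTransform f s) := by
        simp only [← sum_walsh_mul_walshTransform, AddChar.map_add_eq_mul, mul_assoc]
    _ = (-1) ^ w * ∑ s, walsh s x * walshTransform f s + (1 - (-1) ^ w) * walshTransform f 0 := by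
        simp only [hsign, mul_add, sum_add_distrib, mul_ite, mul_zero, sum_ite_eq', mem_univ,
          if_true, walsh_zero, AddChar.zero_apply, one_mul, mul_sum]
        exact congrArg (· + _) (sum_congr rfl fun s _ => mul_left_comm _ _ _)
    _ = (-1) ^ w * (2 ^ Fintype.card ι * f x) + (1 - (-1) ^ w) * ∑ y, f y := by
        rw [sum_walsh_mul_walshTransform, walshTransform_zero]

lemma pow_card_mul_apply_add_apply_add_one {w : ℕ} (hw : Fintype.card ι = 2 * w) (hodd : Odd w)
    (x : ι → ZMod 2) : 2 ^ Fintype.card ι * (f x + f (x + 1)) = 2 * ∑ y, f y := by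
  have h := pow_card_mul_apply_add_one hf hw x
  rw [hodd.neg_one_pow] at h
  linarith

lemma apply_add_one_eq {w : ℕ} (hw : Fintype.card ι = 2 * w) (heven : Even w)
    (x : ι → ZMod 2) : f (x + 1) = f x := by
  have h := pow_card_mul_apply_add_one hf hw x
  rw [heven.neg_one_pow, sub_self, zero_mul, add_zero, one_mul] at h
  exact mul_left_cancel₀ (by positivity) h

end ConstantNeighborSum

end Hypercube

open Hypercube

/-- If `n ≡ 2 (mod 4)` and `l` is a distance magic labeling of the hypercube `Qₙ`, then
`l(x) + l(x̄) = 2ⁿ + 1` for every vertex `x` (where `x̄ = x + 𝟏` is the antipode);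
and `Qₙ` admits no distance magic labeling when `n` is even and `n ≢ 2 (mod 4)`. -/
theorem stmt_18 (n : ℕ) (hn : 1 ≤ n) :
    (n % 4 = 2 →
      ∀ (l : (Fin n → ZMod 2) ≃ Fin (2 ^ n)) (k : ℕ),
        (∀ x : Fin n → ZMod 2,
          ∑ y ∈ Finset.univ.filter (fun y => hammingDist x y = 1), ((l y : ℕ) + 1) = k) →
        ∀ x : Fin n → ZMod 2,
          ((l x : ℕ) + 1) + ((l (x + fun _ => 1) : ℕ) + 1) = 2 ^ n + 1) ∧
    (Even n → n % 4 ≠ 2 →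
      ¬ ∃ (l : (Fin n → ZMod 2) ≃ Fin (2 ^ n)) (k : ℕ),
        ∀ x : Fin n → ZMod 2,
          ∑ y ∈ Finset.univ.filter (fun y => hammingDist x y = 1), ((l y : ℕ) + 1) = k) := by
  constructor
  · intro h4 l k hl x
    have hcard : Fintype.card (Fin n) = 2 * (n / 2) := by rw [Fintype.card_fin]; omega
    have h := pow_card_mul_apply_add_apply_add_one (neighborSum_natCast_eq hl) hcard ⟨n / 4, by omega⟩ x
    have hsum : (∑ y, (((l y : ℕ) + 1 : ℕ) : ℤ)) * 2 = 2 ^ n * (2 ^ n + 1) := by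
      exact_mod_cast Equiv.sum_val_add_one_mul_two l
    rw [Fintype.card_fin] at h
    have hpair : (((l x : ℕ) + 1 : ℕ) : ℤ) + (((l (x + 1) : ℕ) + 1 : ℕ) : ℤ) = 2 ^ n + 1 :=
      mul_left_cancel₀ (pow_ne_zero n two_ne_zero) (h.trans (by linarith))
    exact_mod_cast hpair
  · rintro ⟨m, rfl⟩ h4 ⟨l, k, hl⟩
    have hcard : Fintype.card (Fin (m + m)) = 2 * m := by rw [Fintype.card_fin]; omega
    have h := apply_add_one_eq (neighborSum_natCast_eq hl) hcard ⟨m / 2, by omega⟩ 0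
    have hone : (0 + 1 : Fin (m + m) → ZMod 2) = 0 :=
      l.injective (Fin.ext (Nat.add_right_cancel (Nat.cast_injective h)))
    simpa using congrFun hone ⟨0, hn⟩
end
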